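/- arXiv:2108.04194 — 6 statements merged into one kernel-verified Lean document; each statement's English description precedes it below -/
import Mathlib

section
/- Let ψ be an S5 formula containing the subformula φ₁ ∨ ⋯ ∨ φₘ ∨ (φₘ₊₁ ∧ ⋯ ∧ φₙ) at a position of positive polarity (i.e., under no negation), and let p be a propositional atom not occurring in ψ. Then ψ is satisfiable if and only if ψ[(φ₁ ∨ ⋯ ∨ φₘ ∨ p)/that subformula] ∧ □(¬p ∨ φₘ₊₁) ∧ ⋯ ∧ □(¬p ∨ φₙ) is satisfiable. -/
inductive S5 (α : Type) : Type where
  | atom : α → S5 α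
  | neg : S5 α → S5 α
  | and : S5 α → S5 α → S5 α
  | or : S5 α → S5 α → S5 α
  | box : S5 α → S5 α
  | dia : S5 α → S5 α

def S5.sat {α : Type} (I : List (α → Bool)) : ℕ → S5 α → Prop
  | i, S5.atom p => (I.getD i (fun _ => false)) p = true
  | i, S5.neg φ => ¬ S5.sat I i φ
  | i, S5.and φ ψ => S5.sat I i φ ∧ S5.sat I i ψ
  | i, S5.or φ ψ => S5.sat I i φ ∨ S5.sat I i ψ
  | _, S5.box φ => ∀ j, j < I.length → S5.sat I j φ
  | _, S5.dia φ => ∃ j, j < I.length ∧ S5.sat I j φ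

/-- `φ₁ ∧ (φ₂ ∧ ⋯ ∧ φₙ)` for the nonempty list with head `φ` and tail `l`. -/
def bigAnd {α : Type} : S5 α → List (S5 α) → S5 α
  | φ, [] => φ
  | φ, ψ :: l => S5.and φ (bigAnd ψ l)

/-- `φ₁ ∨ (φ₂ ∨ ⋯ ∨ φₙ)` for the nonempty list with head `φ` and tail `l`. -/
def bigOr {α : Type} : S5 α → List (S5 α) → S5 α
  | φ, [] => φ
  | φ, ψ :: l => S5.or φ (bigOr ψ l)

/-- A modal operator: `true` is `□`, `false` is `◇`. -/
def applyMod {α : Type} (b : Bool) (φ : S5 α) : S5 α :=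
  if b then S5.box φ else S5.dia φ

def Satisfiable {α : Type} (φ : S5 α) : Prop :=
  ∃ I : List (α → Bool), I ≠ [] ∧ S5.sat I 0 φ

/-- `litF (true, p) = p` and `litF (false, p) = ¬p`. -/
def litF {α : Type} (ℓ : Bool × α) : S5 α :=
  if ℓ.1 then S5.atom ℓ.2 else S5.neg (S5.atom ℓ.2)

/-- Complement of a propositional literal. -/
def litCompl {α : Type} (ℓ : Bool × α) : Bool × α := (!ℓ.1, ℓ.2)


/-- Formula contexts whose hole is at a position of positive polarity
(i.e. under no negation). -/
inductive PosCtx (α : Type) : Type where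
  | hole : PosCtx α
  | andL : PosCtx α → S5 α → PosCtx α
  | andR : S5 α → PosCtx α → PosCtx α
  | orL : PosCtx α → S5 α → PosCtx α
  | orR : S5 α → PosCtx α → PosCtx α
  | box : PosCtx α → PosCtx α
  | dia : PosCtx α → PosCtx α

def PosCtx.fill {α : Type} : PosCtx α → S5 α → S5 α
  | PosCtx.hole, χ => χ
  | PosCtx.andL C ψ, χ => S5.and (C.fill χ) ψ
  | PosCtx.andR ψ C, χ => S5.and ψ (C.fill χ)
  | PosCtx.orL C ψ, χ => S5.or (C.fill χ) ψ
  | PosCtx.orR ψ C, χ => S5.or ψ (C.fill χ)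
  | PosCtx.box C, χ => S5.box (C.fill χ)
  | PosCtx.dia C, χ => S5.dia (C.fill χ)

/-- `occurs p φ` holds iff the atom `p` occurs in `φ`. -/
def occurs {α : Type} (p : α) : S5 α → Prop
  | S5.atom q => p = q
  | S5.neg φ => occurs p φ
  | S5.and φ ψ => occurs p φ ∨ occurs p ψ
  | S5.or φ ψ => occurs p φ ∨ occurs p ψ
  | S5.box φ => occurs p φ
  | S5.dia φ => occurs p φ

lemma sat_bigAnd' {α : Type} (I : List (α → Bool)) (i : ℕ) (φ : S5 α) (l : List (S5 α)) :
    S5.sat I i (bigAnd φ l) ↔ ∀ x ∈ φ :: l, S5.sat I i x := by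
  induction l generalizing φ with
  | nil => simp [bigAnd]
  | cons ψ l ih =>
    simp [bigAnd, S5.sat, ih, List.forall_mem_cons]

lemma occurs_bigAnd' {α : Type} (p : α) (φ : S5 α) (l : List (S5 α)) :
    occurs p (bigAnd φ l) ↔ ∃ x ∈ φ :: l, occurs p x := by
  induction l generalizing φ with
  | nil => simp [bigAnd]
  | cons ψ l ih =>
    simp only [bigAnd, occurs, ih, List.exists_mem_cons_iff]

lemma sat_bigOr_append {α : Type} (I : List (α → Bool)) (i : ℕ) (φ x : S5 α)
    (l : List (S5 α)) :
    S5.sat I i (bigOr φ (l ++ [x])) ↔ S5.sat I i (bigOr φ l) ∨ S5.sat I i x := by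
  induction l generalizing φ with
  | nil => simp [bigOr, S5.sat]
  | cons ψ l ih =>
    simp only [List.cons_append, List.append_eq, bigOr, S5.sat, ih, or_assoc]

lemma occurs_bigOr_append {α : Type} (p : α) (φ x : S5 α) (l : List (S5 α)) :
    occurs p x → occurs p (bigOr φ (l ++ [x])) := by
  induction l generalizing φ with
  | nil => intro h; exact Or.inr h
  | cons ψ l ih => intro h; exact Or.inr (ih ψ h)

lemma occurs_fill {α : Type} (p : α) (A : S5 α) :
    ∀ C : PosCtx α, occurs p A → occurs p (C.fill A) := by
  intro C
  induction C with
  | hole => exact id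
  | andL C ψ ih => exact fun h => Or.inl (ih h)
  | andR ψ C ih => exact fun h => Or.inr (ih h)
  | orL C ψ ih => exact fun h => Or.inl (ih h)
  | orR ψ C ih => exact fun h => Or.inr (ih h)
  | box C ih => exact ih
  | dia C ih => exact ih

lemma sat_congr {α : Type} (I I' : List (α → Bool)) (hlen : I.length = I'.length) :
    ∀ θ : S5 α,
      (∀ j q, occurs q θ → (I.getD j (fun _ => false)) q = (I'.getD j (fun _ => false)) q) →
      ∀ i, S5.sat I i θ ↔ S5.sat I' i θ := by
  intro θ
  induction θ with
  | atom q => intro h i; simp only [S5.sat]; rw [h i q rfl]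
  | neg φ ih => intro h i; exact not_congr (ih h i)
  | and φ ψ ihφ ihψ =>
      intro h i
      exact and_congr (ihφ (fun j q hq => h j q (Or.inl hq)) i)
        (ihψ (fun j q hq => h j q (Or.inr hq)) i)
  | or φ ψ ihφ ihψ =>
      intro h i
      exact or_congr (ihφ (fun j q hq => h j q (Or.inl hq)) i)
        (ihψ (fun j q hq => h j q (Or.inr hq)) i)
  | box φ ih =>
      intro h i
      simp only [S5.sat, hlen]
      exact forall_congr' fun j => imp_congr Iff.rfl (ih h j)
  | dia φ ih =>
      intro h i
      simp only [S5.sat, hlen]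
      exact exists_congr fun j => and_congr Iff.rfl (ih h j)

lemma sat_mono {α : Type} (I : List (α → Bool)) (A B : S5 α)
    (h : ∀ j, j < I.length → S5.sat I j A → S5.sat I j B) :
    ∀ (C : PosCtx α) (i : ℕ), i < I.length →
      S5.sat I i (C.fill A) → S5.sat I i (C.fill B) := by
  intro C
  induction C with
  | hole => exact h
  | andL C ψ ih => exact fun i hi hs => ⟨ih i hi hs.1, hs.2⟩
  | andR ψ C ih => exact fun i hi hs => ⟨hs.1, ih i hi hs.2⟩
  | orL C ψ ih => exact fun i hi hs => hs.imp (ih i hi) id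
  | orR ψ C ih => exact fun i hi hs => hs.imp id (ih i hi)
  | box C ih => exact fun i hi hs j hj => ih j hj (hs j hj)
  | dia C ih => exact fun i hi ⟨j, hj, hsj⟩ => ⟨j, hj, ih j hj hsj⟩

theorem positive_definitional_clause_introduction {α : Type}
    (C : PosCtx α) (φ₁ : S5 α) (φs : List (S5 α)) (χ₁ : S5 α) (χs : List (S5 α))
    (p : α)
    (hfresh : ¬ occurs p (C.fill (bigOr φ₁ (φs ++ [bigAnd χ₁ χs])))) :
    Satisfiable (C.fill (bigOr φ₁ (φs ++ [bigAnd χ₁ χs]))) ↔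
      Satisfiable (bigAnd (C.fill (bigOr φ₁ (φs ++ [S5.atom p])))
        ((χ₁ :: χs).map fun χ => S5.box (S5.or (S5.neg (S5.atom p)) χ))) := by
  classical
  set A := bigOr φ₁ (φs ++ [bigAnd χ₁ χs]) with hAdef
  set B := bigOr φ₁ (φs ++ [S5.atom p]) with hBdef
  have hpA : ¬ occurs p A := fun h => hfresh (occurs_fill p A C h)
  have hpAnd : ¬ occurs p (bigAnd χ₁ χs) := fun h =>
    hpA (occurs_bigOr_append p φ₁ _ φs h)
  have hpχ : ∀ χ ∈ χ₁ :: χs, ¬ occurs p χ := fun χ hχ h =>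
    hpAnd ((occurs_bigAnd' p χ₁ χs).2 ⟨χ, hχ, h⟩)
  constructor
  · rintro ⟨I, hne, hsat⟩
    have hlenpos : 0 < I.length := List.length_pos_iff.mpr hne
    set f : ℕ → α → Bool := fun j q =>
      if q = p then (if S5.sat I j (bigAnd χ₁ χs) then true else false)
      else (I.getD j (fun _ => false)) q with hf
    set I' : List (α → Bool) := (List.range I.length).map f with hI'
    have hlen : I.length = I'.length := by simp [hI']
    have hget : ∀ j, j < I.length → I'.getD j (fun _ => false) = f j := by
      intro j hj
      rw [hI', List.getD_eq_getElem?_getD]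
      simp [hj]
    have hagree : ∀ j q, q ≠ p →
        (I.getD j (fun _ => false)) q = (I'.getD j (fun _ => false)) q := by
      intro j q hq
      by_cases hj : j < I.length
      · rw [hget j hj]; simp [hf, hq]
      · rw [List.getD_eq_default, List.getD_eq_default]
        · omega
        · omega
    have congrθ : ∀ θ, ¬ occurs p θ → ∀ i, S5.sat I i θ ↔ S5.sat I' i θ :=
      fun θ hθ => sat_congr I I' hlen θ (fun j q hq => hagree j q (fun e => hθ (e ▸ hq)))
    refine ⟨I', ?_, ?_⟩
    · exact List.ne_nil_of_length_pos (hlen ▸ hlenpos)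
    have h1 : S5.sat I' 0 (C.fill A) := (congrθ _ hfresh 0).1 hsat
    have hAB : ∀ j, j < I'.length → S5.sat I' j A → S5.sat I' j B := by
      intro j hj hsA
      have hj' : j < I.length := hlen ▸ hj
      rcases (sat_bigOr_append I' j φ₁ _ φs).1 hsA with h | h
      · exact (sat_bigOr_append I' j φ₁ _ φs).2 (Or.inl h)
      · refine (sat_bigOr_append I' j φ₁ _ φs).2 (Or.inr ?_)
        have hI : S5.sat I j (bigAnd χ₁ χs) := (congrθ _ hpAnd j).2 h
        show (I'.getD j (fun _ => false)) p = true
        rw [hget j hj']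
        simp [hf, hI]
    refine (sat_bigAnd' I' 0 _ _).2 ?_
    intro x hx
    rcases List.mem_cons.1 hx with rfl | hx
    · exact sat_mono I' A B hAB C 0 (hlen ▸ hlenpos) h1
    · simp only [List.mem_map] at hx
      obtain ⟨χ, hχmem, rfl⟩ := hx
      intro j hj
      have hj' : j < I.length := hlen ▸ hj
      by_cases hc : S5.sat I j (bigAnd χ₁ χs)
      · right
        have hχI : S5.sat I j χ := (sat_bigAnd' I j χ₁ χs).1 hc χ hχmem
        exact (congrθ χ (hpχ χ hχmem) j).1 hχI
      · left
        show ¬ (I'.getD j (fun _ => false)) p = true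
        rw [hget j hj']
        simp [hf, hc]
  · rintro ⟨I, hne, hsat⟩
    refine ⟨I, hne, ?_⟩
    have hlenpos : 0 < I.length := List.length_pos_iff.mpr hne
    have h := (sat_bigAnd' I 0 _ _).1 hsat
    have hhead : S5.sat I 0 (C.fill B) := h _ List.mem_cons_self
    have hboxes : ∀ χ ∈ χ₁ :: χs, ∀ j, j < I.length →
        S5.sat I j (S5.or (S5.neg (S5.atom p)) χ) := by
      intro χ hχ j hj
      exact h _ (List.mem_cons_of_mem _ (List.mem_map_of_mem hχ)) j hj
    have hBA : ∀ j, j < I.length → S5.sat I j B → S5.sat I j A := by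
      intro j hj hsB
      rcases (sat_bigOr_append I j φ₁ _ φs).1 hsB with h' | h'
      · exact (sat_bigOr_append I j φ₁ _ φs).2 (Or.inl h')
      · refine (sat_bigOr_append I j φ₁ _ φs).2 (Or.inr ?_)
        refine (sat_bigAnd' I j χ₁ χs).2 ?_
        intro χ hχ
        rcases hboxes χ hχ j hj with hnp | hχs
        · exact absurd h' hnp
        · exact hχs
    exact sat_mono I B A hBA C 0 hlenpos hhead
end

section
/- Let φ be a formula in S5 normal form (a conjunction of S5-clauses, i.e., disjunctions of propositional literals, □-literals □(ℓ₁∨⋯∨ℓₖ), and ◇-literals ◇(ℓ₁∧⋯∧ℓₖ)). Fix an enumeration of its m □-literals □ψ^□₁,…,□ψ^□ₘ and n ◇-literals ◇ψ^◇₁,…,◇ψ^◇ₙ. Define the propositional theory he(φ) over atoms {p(j) : p ∈ atoms(φ), j ∈ [0..n]} ∪ {b₁,…,bₘ} ∪ {d₁,…,dₙ} consisting of: the matrix of φ with each □-literal replaced by bᵢ, each ◇-literal replaced by dᵢ, and each free propositional literal ℓ replaced by ℓ(0); the implications bᵢ → ψ^□ᵢ(j) for all i ∈ [1..m] and j ∈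 [0..n]; and the implications dᵢ → ψ^◇ᵢ(i) for all i ∈ [1..n]. Then φ is S5-satisfiable if and only if he(φ) is propositionally satisfiable. -/
abbrev Lit (α : Type) := Bool × α

def Lit.compl {α : Type} (ℓ : Lit α) : Lit α := (!ℓ.1, ℓ.2)

def litHolds {α : Type} (w : α → Bool) (ℓ : Lit α) : Prop := w ℓ.2 = ℓ.1

/-- The matrix of an S5-NF formula refers to free literals, □-literals `bᵢ`
and ◇-literals `dⱼ` by index. -/
inductive MatLit (α : Type) (m n : ℕ) : Type where
  | lit : Lit α → MatLit α m n
  | boxRef : Fin m → MatLit α m n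
  | diaRef : Fin n → MatLit α m n

/-- An S5-NF formula with a fixed enumeration of its `m` □-literals
`□ψ^□ᵢ` (disjunctions of literals) and its `n` ◇-literals `◇ψ^◇ⱼ`
(conjunctions of literals); `matrix` is the conjunction of S5-clauses. -/
structure NF (α : Type) (m n : ℕ) : Type where
  boxes : Fin m → List (Lit α)
  dias : Fin n → List (Lit α)
  matrix : List (List (MatLit α m n))
  boxes_ne : ∀ i, boxes i ≠ []
  dias_ne : ∀ j, dias j ≠ []

def dfltW {α : Type} : α → Bool := fun _ => false

/-- S5 satisfaction of an S5-literal of the matrix, over the list of worlds `I`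
(free literals are evaluated at world 0). -/
def NF.matLitSat {α : Type} {m n : ℕ} (F : NF α m n) (I : List (α → Bool)) :
    MatLit α m n → Prop
  | MatLit.lit ℓ => litHolds (I.getD 0 dfltW) ℓ
  | MatLit.boxRef i => ∀ k, k < I.length → ∃ ℓ ∈ F.boxes i, litHolds (I.getD k dfltW) ℓ
  | MatLit.diaRef j => ∃ k, k < I.length ∧ ∀ ℓ ∈ F.dias j, litHolds (I.getD k dfltW) ℓ

/-- `(I,0) ⊨ F` for the nonempty list of worlds `I`. -/
def NF.s5satOn {α : Type} {m n : ℕ} (F : NF α m n) (I : List (α → Bool)) : Prop :=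
  ∀ C ∈ F.matrix, ∃ L ∈ C, F.matLitSat I L

/-- S5 satisfiability of the S5-NF formula `F`. -/
def NF.s5sat {α : Type} {m n : ℕ} (F : NF α m n) : Prop :=
  ∃ I : List (α → Bool), I ≠ [] ∧ F.s5satOn I

/-- Propositional atoms of the Skolemised encodings: copies `p(j)` of the
atoms for worlds `j ∈ [0..n]`, plus fresh atoms `bᵢ`, `dⱼ`, `impliedⱼ`. -/
inductive PAtom (α : Type) (m n : ℕ) : Type where
  | cp : α → Fin (n + 1) → PAtom α m n
  | b : Fin m → PAtom α m n
  | d : Fin n → PAtom α m n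
  | implied : Fin n → PAtom α m n

/-- Truth of the world-`j` copy `ℓ(j)` of a literal under assignment `v`. -/
def litAt {α : Type} {m n : ℕ} (v : PAtom α m n → Bool) (j : Fin (n + 1))
    (ℓ : Lit α) : Prop :=
  v (PAtom.cp ℓ.2 j) = ℓ.1

/-- `ψ^□ᵢ(j)`: the world-`j` copy of the disjunction `ψ^□ᵢ`. -/
def boxAt {α : Type} {m n : ℕ} (F : NF α m n) (v : PAtom α m n → Bool)
    (j : Fin (n + 1)) (i : Fin m) : Prop :=
  ∃ ℓ ∈ F.boxes i, litAt v j ℓ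

/-- `ψ^◇ⱼᵈ(j)`: the world-`j` copy of the conjunction `ψ^◇ⱼᵈ`. -/
def diaAt {α : Type} {m n : ℕ} (F : NF α m n) (v : PAtom α m n → Bool)
    (j : Fin (n + 1)) (jd : Fin n) : Prop :=
  ∀ ℓ ∈ F.dias jd, litAt v j ℓ

/-- Truth of a matrix S5-literal: free literals at world 0, □-literals as `bᵢ`,
◇-literals as `dⱼ`. -/
def matLitP {α : Type} {m n : ℕ} (v : PAtom α m n → Bool) : MatLit α m n → Prop
  | MatLit.lit ℓ => litAt v 0 ℓ
  | MatLit.boxRef i => v (PAtom.b i) = true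
  | MatLit.diaRef j => v (PAtom.d j) = true

def matrixSat {α : Type} {m n : ℕ} (F : NF α m n) (v : PAtom α m n → Bool) : Prop :=
  ∀ C ∈ F.matrix, ∃ L ∈ C, matLitP v L

/-- The theory `he(F)`: the matrix, `bᵢ → ψ^□ᵢ(j)` for all `j ∈ [0..n]`,
and `dⱼ → ψ^◇ⱼ(j)` (the ◇-literal `j` is witnessed at world `j + 1`). -/
def heSat {α : Type} {m n : ℕ} (F : NF α m n) (v : PAtom α m n → Bool) : Prop :=
  matrixSat F v ∧
  (∀ i : Fin m, ∀ j : Fin (n + 1), v (PAtom.b i) = true → boxAt F v j i) ∧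
  (∀ j : Fin n, v (PAtom.d j) = true → diaAt F v j.succ j)

/-- The theory `full(F)`: as `he(F)` but `bᵢ → ψ^□ᵢ(j)` for `j ≥ 1` is replaced
by `bᵢ ∧ dⱼ ∧ ¬impliedⱼ → ψ^□ᵢ(j)`, `impliedⱼ ↔ ψ^◇ⱼ(0)` and `impliedⱼ → dⱼ`. -/
def fullSat {α : Type} {m n : ℕ} (F : NF α m n) (v : PAtom α m n → Bool) : Prop :=
  matrixSat F v ∧
  (∀ i : Fin m, v (PAtom.b i) = true → boxAt F v 0 i) ∧
  (∀ i : Fin m, ∀ j : Fin n, v (PAtom.b i) = true → v (PAtom.d j) = true →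
    v (PAtom.implied j) = false → boxAt F v j.succ i) ∧
  (∀ j : Fin n, (v (PAtom.implied j) = true ↔ diaAt F v 0 j)) ∧
  (∀ j : Fin n, v (PAtom.implied j) = true → v (PAtom.d j) = true) ∧
  (∀ j : Fin n, v (PAtom.d j) = true → diaAt F v j.succ j)

/-- One step of unit propagation:
`UP(L) = L ∪ ⋃ { lits(ψ^□ᵢ) \ {ℓ̄} : ℓ ∈ L, ℓ̄ ∈ lits(ψ^□ᵢ) }`. -/
def UP {α : Type} {m n : ℕ} (F : NF α m n) (L : Set (Lit α)) : Set (Lit α) :=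
  L ∪ {ℓ' | ∃ ℓ ∈ L, ∃ i : Fin m,
        Lit.compl ℓ ∈ F.boxes i ∧ ℓ' ∈ F.boxes i ∧ ℓ' ≠ Lit.compl ℓ}

/-- `UP⇑S`: the least `UP`-closed set containing `S`. -/
def UPcl {α : Type} {m n : ℕ} (F : NF α m n) (S : Set (Lit α)) : Set (Lit α) :=
  ⋂₀ {T : Set (Lit α) | S ⊆ T ∧ UP F T ⊆ T}

/-- `Bⱼ = { i : complement of UP⇑lits(ψ^◇ⱼ) intersects lits(ψ^□ᵢ) }`. -/
def Bset {α : Type} {m n : ℕ} (F : NF α m n) (j : Fin n) : Set (Fin m) :=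
  {i | ∃ ℓ ∈ UPcl F {ℓ : Lit α | ℓ ∈ F.dias j}, Lit.compl ℓ ∈ F.boxes i}

/-- The theory `reach(F)`: as `full(F)` but the clauses
`bᵢ ∧ dⱼ ∧ ¬impliedⱼ → ψ^□ᵢ(j)` are kept only for `i ∈ Bⱼ`. -/
def reachSat {α : Type} {m n : ℕ} (F : NF α m n) (v : PAtom α m n → Bool) : Prop :=
  matrixSat F v ∧
  (∀ i : Fin m, v (PAtom.b i) = true → boxAt F v 0 i) ∧
  (∀ i : Fin m, ∀ j : Fin n, i ∈ Bset F j → v (PAtom.b i) = true →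
    v (PAtom.d j) = true → v (PAtom.implied j) = false → boxAt F v j.succ i) ∧
  (∀ j : Fin n, (v (PAtom.implied j) = true ↔ diaAt F v 0 j)) ∧
  (∀ j : Fin n, v (PAtom.implied j) = true → v (PAtom.d j) = true) ∧
  (∀ j : Fin n, v (PAtom.d j) = true → diaAt F v j.succ j)

/-- The additional conflict clauses `¬bᵢ ∨ ¬dⱼ` whenever the complement of
`lits(ψ^□ᵢ)` is contained in `lits(ψ^◇ⱼ)`. -/
def conflictsExtra {α : Type} {m n : ℕ} (F : NF α m n) (v : PAtom α m n → Bool) : Prop :=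
  ∀ i : Fin m, ∀ j : Fin n, (∀ ℓ ∈ F.boxes i, Lit.compl ℓ ∈ F.dias j) →
    ¬ (v (PAtom.b i) = true ∧ v (PAtom.d j) = true)


theorem he_equisat {α : Type} {m n : ℕ} (F : NF α m n) :
    F.s5sat ↔ ∃ v : PAtom α m n → Bool, heSat F v := by
  classical
  constructor
  · rintro ⟨I, hne, hsat⟩
    have hlen : 0 < I.length := List.length_pos_iff.mpr hne
    set wit : Fin n → ℕ := fun j =>
      if h : ∃ k, k < I.length ∧ ∀ ℓ ∈ F.dias j, litHolds (I.getD k dfltW) ℓ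
      then h.choose else 0 with hwit
    set f : Fin (n + 1) → ℕ := Fin.cases 0 wit with hf
    have hflt : ∀ j, f j < I.length := by
      intro j
      refine Fin.cases ?_ ?_ j
      · simpa [hf] using hlen
      · intro j'
        simp only [hf, Fin.cases_succ, hwit]
        split
        · next h => exact h.choose_spec.1
        · exact hlen
    set v : PAtom α m n → Bool := fun a =>
      match a with
      | PAtom.cp p j => I.getD (f j) dfltW p
      | PAtom.b i => decide (∀ k, k < I.length → ∃ ℓ ∈ F.boxes i, litHolds (I.getD k dfltW) ℓ)
      | PAtom.d j => decide (∃ k, k < I.length ∧ ∀ ℓ ∈ F.dias j, litHolds (I.getD k dfltW) ℓ)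
      | PAtom.implied _ => false
      with hv
    have hlit : ∀ (j : Fin (n+1)) (ℓ : Lit α), litAt v j ℓ ↔ litHolds (I.getD (f j) dfltW) ℓ := by
      intro j ℓ
      simp [litAt, hv, litHolds]
    refine ⟨v, ?_, ?_, ?_⟩
    · intro C hC
      obtain ⟨L, hL, hLs⟩ := hsat C hC
      refine ⟨L, hL, ?_⟩
      cases L with
      | lit ℓ =>
          simp only [matLitP, hlit]
          simpa [hf, NF.matLitSat] using hLs
      | boxRef i =>
          simp only [matLitP, hv, decide_eq_true_iff]
          exact hLs
      | diaRef j =>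
          simp only [matLitP, hv, decide_eq_true_iff]
          exact hLs
    · intro i j hb
      have hb' : ∀ k, k < I.length → ∃ ℓ ∈ F.boxes i, litHolds (I.getD k dfltW) ℓ := by
        simpa [hv] using hb
      obtain ⟨ℓ, hℓ, hh⟩ := hb' (f j) (hflt j)
      exact ⟨ℓ, hℓ, (hlit j ℓ).mpr hh⟩
    · intro j hd
      have hd' : ∃ k, k < I.length ∧ ∀ ℓ ∈ F.dias j, litHolds (I.getD k dfltW) ℓ := by
        simpa [hv] using hd
      intro ℓ hℓ
      refine (hlit j.succ ℓ).mpr ?_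
      have hfj : f j.succ = hd'.choose := by
        simp only [hf, hwit, Fin.cases_succ]
        exact dif_pos hd'
      rw [hfj]
      exact (Classical.choose_spec hd').2 ℓ hℓ
  · rintro ⟨v, hmat, hbox, hdia⟩
    set I : List (α → Bool) :=
      (List.finRange (n + 1)).map (fun j => fun p => v (PAtom.cp p j)) with hI
    have hIlen : I.length = n + 1 := by simp [hI]
    have hget : ∀ (k : ℕ) (hk : k < n + 1),
        I.getD k dfltW = fun p => v (PAtom.cp p ⟨k, hk⟩) := by
      intro k hk
      have hk' : k < I.length := by omega
      rw [List.getD_eq_getElem _ _ hk']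
      simp [hI]
    refine ⟨I, by simp [hI], ?_⟩
    intro C hC
    obtain ⟨L, hL, hLs⟩ := hmat C hC
    refine ⟨L, hL, ?_⟩
    cases L with
    | lit ℓ =>
        simp only [NF.matLitSat]
        rw [hget 0 (Nat.succ_pos n)]
        simpa [litAt, litHolds, matLitP] using hLs
    | boxRef i =>
        simp only [NF.matLitSat]
        intro k hk
        have hk' : k < n + 1 := by omega
        obtain ⟨ℓ, hℓ, hh⟩ := hbox i ⟨k, hk'⟩ hLs
        refine ⟨ℓ, hℓ, ?_⟩
        rw [hget k hk']
        simpa [litAt, litHolds] using hh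
    | diaRef j =>
        simp only [NF.matLitSat]
        refine ⟨j + 1, by omega, ?_⟩
        intro ℓ hℓ
        have hh := hdia j hLs ℓ hℓ
        have hlt : (j : ℕ) + 1 < n + 1 := by omega
        rw [hget (j + 1) hlt]
        have : j.succ = ⟨(j : ℕ) + 1, hlt⟩ := by
          ext; simp
        rw [this] at hh
        simpa [litAt, litHolds] using hh
end

section
/- Let φ be a formula in S5 normal form with m □-literals and n ◇-literals, and let full(φ) be the propositional theory obtained from he(φ) by replacing each clause bᵢ → ψ^□ᵢ(j) for j ∈ [1..n] with the formulas bᵢ ∧ dⱼ ∧ ¬impliedⱼ → ψ^□ᵢ(j), impliedⱼ ↔ ψ^◇ⱼ(0), and impliedⱼ → dⱼ, where impliedⱼ are fresh atoms. Then full(φ) is satisfiable if and only if he(φ) is satisfiable. -/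
section Aux
open scoped Classical

variable {α : Type} {m n : ℕ}

/-- he → full transformation. -/
noncomputable def tr1 (F : NF α m n) (v : PAtom α m n → Bool) : PAtom α m n → Bool
  | PAtom.cp x j => if ∃ j' : Fin n, j = j'.succ ∧ (diaAt F v 0 j' ∧ v (PAtom.d j') = false)
      then v (PAtom.cp x 0) else v (PAtom.cp x j)
  | PAtom.b i => v (PAtom.b i)
  | PAtom.d j => if diaAt F v 0 j ∧ v (PAtom.d j) = false then true else v (PAtom.d j)
  | PAtom.implied j => if diaAt F v 0 j then true else false

lemma tr1_cp0 (F : NF α m n) (v : PAtom α m n → Bool) (x : α) :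
    tr1 F v (PAtom.cp x 0) = v (PAtom.cp x 0) := by
  show (if _ then _ else _) = _
  split <;> rfl

lemma tr1_cp_succ (F : NF α m n) (v : PAtom α m n → Bool) (x : α) (j : Fin n) :
    tr1 F v (PAtom.cp x j.succ) =
      if diaAt F v 0 j ∧ v (PAtom.d j) = false then v (PAtom.cp x 0) else v (PAtom.cp x j.succ) := by
  show (if _ then _ else _) = _
  congr 1
  simp only [eq_iff_iff]
  constructor
  · rintro ⟨k, hk, h⟩
    cases Fin.succ_injective _ hk.symm
    exact h
  · intro h; exact ⟨j, rfl, h⟩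

lemma tr1_litAt0 (F : NF α m n) (v : PAtom α m n → Bool) (ℓ : Lit α) :
    litAt (tr1 F v) 0 ℓ ↔ litAt v 0 ℓ := by
  unfold litAt; rw [tr1_cp0]

lemma tr1_diaAt0 (F : NF α m n) (v : PAtom α m n → Bool) (j : Fin n) :
    diaAt F (tr1 F v) 0 j ↔ diaAt F v 0 j := by
  unfold diaAt; simp only [tr1_litAt0]

lemma tr1_boxAt0 (F : NF α m n) (v : PAtom α m n → Bool) (i : Fin m) :
    boxAt F (tr1 F v) 0 i ↔ boxAt F v 0 i := by
  unfold boxAt; simp only [tr1_litAt0]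

theorem tr1_full (F : NF α m n) (v : PAtom α m n → Bool) (h : heSat F v) :
    fullSat F (tr1 F v) := by
  obtain ⟨hmat, hbox, hdia⟩ := h
  have hb : ∀ i, tr1 F v (PAtom.b i) = v (PAtom.b i) := fun i => rfl
  have hd : ∀ j, tr1 F v (PAtom.d j) =
      (if diaAt F v 0 j ∧ v (PAtom.d j) = false then true else v (PAtom.d j)) := fun j => rfl
  have himp : ∀ j, tr1 F v (PAtom.implied j) = (if diaAt F v 0 j then true else false) :=
    fun j => rfl
  refine ⟨?_, ?_, ?_, ?_, ?_, ?_⟩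
  · intro C hC
    obtain ⟨L, hL, hLP⟩ := hmat C hC
    refine ⟨L, hL, ?_⟩
    cases L with
    | lit ℓ => exact (tr1_litAt0 F v ℓ).mpr hLP
    | boxRef i => exact hLP
    | diaRef j =>
      show tr1 F v (PAtom.d j) = true
      rw [hd]; split
      · rfl
      · exact hLP
  · intro i hbi
    rw [hb] at hbi
    exact (tr1_boxAt0 F v i).mpr (hbox i 0 hbi)
  · intro i j hbi hdj himpj
    rw [himp] at himpj
    have hndia : ¬ diaAt F v 0 j := by
      intro hdia; rw [if_pos hdia] at himpj; exact absurd himpj (by simp)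
    have hbj := hbox i j.succ (by rwa [hb] at hbi)
    obtain ⟨ℓ, hℓ, hℓh⟩ := hbj
    refine ⟨ℓ, hℓ, ?_⟩
    unfold litAt
    rw [tr1_cp_succ, if_neg (fun hc => hndia hc.1)]
    exact hℓh
  · intro j
    rw [himp, tr1_diaAt0]
    split <;> simp_all
  · intro j hij
    rw [himp] at hij
    have hdia : diaAt F v 0 j := by by_contra hc; rw [if_neg hc] at hij; simp at hij
    rw [hd]
    split
    · rfl
    · rename_i hc
      rcases Bool.eq_false_or_eq_true (v (PAtom.d j)) with h' | h'
      · exact h'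
      · exact absurd ⟨hdia, h'⟩ hc
  · intro j hdj
    rw [hd] at hdj
    by_cases hc : diaAt F v 0 j ∧ v (PAtom.d j) = false
    · intro ℓ hℓ
      unfold litAt
      rw [tr1_cp_succ, if_pos hc]
      exact hc.1 ℓ hℓ
    · rw [if_neg hc] at hdj
      intro ℓ hℓ
      unfold litAt
      rw [tr1_cp_succ, if_neg hc]
      exact hdia j hdj ℓ hℓ

/-- full → he transformation. -/
noncomputable def tr2 (F : NF α m n) (v : PAtom α m n → Bool) : PAtom α m n → Bool
  | PAtom.cp x j => if ∃ j' : Fin n, j = j'.succ ∧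
        (v (PAtom.implied j') = true ∨ v (PAtom.d j') = false)
      then v (PAtom.cp x 0) else v (PAtom.cp x j)
  | a => v a

lemma tr2_cp0 (F : NF α m n) (v : PAtom α m n → Bool) (x : α) :
    tr2 F v (PAtom.cp x 0) = v (PAtom.cp x 0) := by
  show (if _ then _ else _) = _
  split <;> rfl

lemma tr2_cp_succ (F : NF α m n) (v : PAtom α m n → Bool) (x : α) (j : Fin n) :
    tr2 F v (PAtom.cp x j.succ) =
      if v (PAtom.implied j) = true ∨ v (PAtom.d j) = false
      then v (PAtom.cp x 0) else v (PAtom.cp x j.succ) := by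
  show (if _ then _ else _) = _
  congr 1
  simp only [eq_iff_iff]
  constructor
  · rintro ⟨k, hk, h⟩
    cases Fin.succ_injective _ hk.symm
    exact h
  · intro h; exact ⟨j, rfl, h⟩

lemma tr2_litAt0 (F : NF α m n) (v : PAtom α m n → Bool) (ℓ : Lit α) :
    litAt (tr2 F v) 0 ℓ ↔ litAt v 0 ℓ := by
  unfold litAt; rw [tr2_cp0]

theorem tr2_he (F : NF α m n) (v : PAtom α m n → Bool) (h : fullSat F v) :
    heSat F (tr2 F v) := by
  obtain ⟨hmat, hbox0, hboxj, himpIff, himpd, hdia⟩ := h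
  have hb : ∀ i, tr2 F v (PAtom.b i) = v (PAtom.b i) := fun i => rfl
  have hd : ∀ j, tr2 F v (PAtom.d j) = v (PAtom.d j) := fun j => rfl
  refine ⟨?_, ?_, ?_⟩
  · intro C hC
    obtain ⟨L, hL, hLP⟩ := hmat C hC
    refine ⟨L, hL, ?_⟩
    cases L with
    | lit ℓ => exact (tr2_litAt0 F v ℓ).mpr hLP
    | boxRef i => exact hLP
    | diaRef j => exact hLP
  · intro i j hbi
    rw [hb] at hbi
    induction j using Fin.cases with
    | zero =>
      obtain ⟨ℓ, hℓ, hℓh⟩ := hbox0 i hbi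
      exact ⟨ℓ, hℓ, (tr2_litAt0 F v ℓ).mpr hℓh⟩
    | succ j =>
      by_cases hc : v (PAtom.implied j) = true ∨ v (PAtom.d j) = false
      · obtain ⟨ℓ, hℓ, hℓh⟩ := hbox0 i hbi
        refine ⟨ℓ, hℓ, ?_⟩
        unfold litAt
        rw [tr2_cp_succ, if_pos hc]
        exact hℓh
      · push_neg at hc
        obtain ⟨h1, h2⟩ := hc
        have h2' : v (PAtom.d j) = true := by
          rcases Bool.eq_false_or_eq_true (v (PAtom.d j)) with h' | h'
          · exact h'
          · exact absurd h' h2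
        have h1' : v (PAtom.implied j) = false := by
          rcases Bool.eq_false_or_eq_true (v (PAtom.implied j)) with h' | h'
          · exact absurd h' h1
          · exact h'
        obtain ⟨ℓ, hℓ, hℓh⟩ := hboxj i j hbi h2' h1'
        refine ⟨ℓ, hℓ, ?_⟩
        unfold litAt
        rw [tr2_cp_succ, if_neg (by push_neg; exact ⟨h1, h2⟩)]
        exact hℓh
  · intro j hdj
    rw [hd] at hdj
    by_cases hc : v (PAtom.implied j) = true
    · have hdia0 := (himpIff j).mp hc
      intro ℓ hℓ
      unfold litAt
      rw [tr2_cp_succ, if_pos (Or.inl hc)]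
      exact hdia0 ℓ hℓ
    · have hc' : v (PAtom.implied j) = false := by
        rcases Bool.eq_false_or_eq_true (v (PAtom.implied j)) with h' | h'
        · exact absurd h' hc
        · exact h'
      intro ℓ hℓ
      unfold litAt
      rw [tr2_cp_succ, if_neg (by rw [hdj, hc']; simp)]
      exact hdia j hdj ℓ hℓ

end Aux

theorem full_equisat_he {α : Type} {m n : ℕ} (F : NF α m n) :
    (∃ v : PAtom α m n → Bool, fullSat F v) ↔ (∃ v : PAtom α m n → Bool, heSat F v) := by
  constructor
  · rintro ⟨v, hv⟩; exact ⟨tr2 F v, tr2_he F v hv⟩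
  · rintro ⟨v, hv⟩; exact ⟨tr1 F v, tr1_full F v hv⟩
end

section
/- Let φ be an S5-NF formula with □-literals ψ^□₁,…,ψ^□ₘ and ◇-literals ψ^◇₁,…,ψ^◇ₙ. Define the unit-propagation operator on sets of propositional literals: UP(L) = L ∪ ⋃{ lits(ψ^□ᵢ) \ {ℓ̄} : ℓ ∈ L, i ∈ [1..m], ℓ̄ ∈ lits(ψ^□ᵢ) }, and let UP⇑S be the least fixed point of UP above S. Let Bⱼ = { i ∈ [1..m] : the complement of UP⇑lits(ψ^◇ⱼ) intersects lits(ψ^□ᵢ) }. Let reach(φ) be obtained from full(φ) by removing the clauses bᵢ ∧ dⱼ ∧ ¬impliedⱼ → ψ^□ᵢ(j) for all i ∉ Bⱼ. Then reach(φ) is satisfiable if and only if full(φ) is satisfiable. -/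
/-! ### Auxiliary machinery for the proof -/

section ReachAux

attribute [local instance] Classical.propDecidable

variable {α : Type} {m n : ℕ}

lemma Lit.compl_compl (ℓ : Lit α) : Lit.compl (Lit.compl ℓ) = ℓ := by
  cases ℓ with | mk b p => simp [Lit.compl]

lemma litHolds_compl_elim {w : α → Bool} {ℓ : Lit α}
    (h1 : litHolds w ℓ) (h2 : litHolds w (Lit.compl ℓ)) : False := by
  cases ℓ with | mk b p =>
    simp only [litHolds, Lit.compl] at h1 h2
    rw [h1] at h2
    cases b <;> simp at h2

lemma subset_UPcl (F : NF α m n) (S : Set (Lit α)) : S ⊆ UPcl F S :=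
  fun _ hx => Set.mem_sInter.2 fun _ hT => hT.1 hx

lemma UPcl_step (F : NF α m n) {S : Set (Lit α)} {ℓ ℓ' : Lit α} {i : Fin m}
    (hℓ : ℓ ∈ UPcl F S) (h1 : Lit.compl ℓ ∈ F.boxes i) (h2 : ℓ' ∈ F.boxes i)
    (h3 : ℓ' ≠ Lit.compl ℓ) : ℓ' ∈ UPcl F S :=
  Set.mem_sInter.2 fun T hT =>
    hT.2 (Set.mem_union _ _ _ |>.2 (Or.inr ⟨ℓ, Set.mem_sInter.1 hℓ T hT, i, h1, h2, h3⟩))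

/-- Literals semantically forced (by sound unit propagation) by the
□-clauses `boxes i` with `bv i = true` alone. -/
inductive Forced (F : NF α m n) (bv : Fin m → Bool) : Lit α → Prop where
  | step : ∀ (i : Fin m) (ℓ : Lit α), bv i = true → ℓ ∈ F.boxes i →
      (∀ ℓ' ∈ F.boxes i, ℓ' ≠ ℓ → Forced F bv (Lit.compl ℓ')) → Forced F bv ℓ

/-- Soundness of `Forced`: any world satisfying all active boxes satisfies
all forced literals. -/
lemma forced_holds {F : NF α m n} {bv : Fin m → Bool} {w : α → Bool}
    (hw : ∀ i, bv i = true → ∃ ℓ ∈ F.boxes i, litHolds w ℓ) :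
    ∀ ℓ, Forced F bv ℓ → litHolds w ℓ := by
  intro ℓ h
  induction h with
  | step i ℓ hb hm _ ih =>
    obtain ⟨ℓ', hm', hh'⟩ := hw i hb
    by_cases he : ℓ' = ℓ
    · exact he ▸ hh'
    · exact absurd (ih ℓ' hm' he) (fun hc => litHolds_compl_elim hh' hc)

/-- Key lemma: a forced literal whose complement lies in `UP⇑lits(ψ^◇ⱼ)` is
true in any world satisfying `dias j` and all active boxes in `Bset F j`. -/
lemma forced_holds_M1 {F : NF α m n} {bv : Fin m → Bool} {j : Fin n} {M1 : α → Bool}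
    (hd : ∀ ℓ ∈ F.dias j, litHolds M1 ℓ)
    (hB : ∀ i, bv i = true → i ∈ Bset F j → ∃ ℓ ∈ F.boxes i, litHolds M1 ℓ) :
    ∀ ℓ, Forced F bv ℓ → Lit.compl ℓ ∈ UPcl F {x : Lit α | x ∈ F.dias j} →
      litHolds M1 ℓ := by
  intro ℓ h
  induction h with
  | step i ℓ hb hm _ ih =>
    intro hU
    have hiB : i ∈ Bset F j := ⟨Lit.compl ℓ, hU, by rw [Lit.compl_compl]; exact hm⟩
    obtain ⟨ℓ', hm', hh'⟩ := hB i hb hiB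
    by_cases he : ℓ' = ℓ
    · exact he ▸ hh'
    · have hU' : ℓ' ∈ UPcl F {x : Lit α | x ∈ F.dias j} :=
        UPcl_step F hU (by rw [Lit.compl_compl]; exact hm) hm'
          (by rw [Lit.compl_compl]; exact he)
      have := ih ℓ' hm' he (by rw [Lit.compl_compl]; exact hU')
      exact absurd this (fun hc => litHolds_compl_elim hh' hc)

/-- The repaired world. -/
noncomputable def repair (F : NF α m n) (bv : Fin m → Bool) (U : Set (Lit α))
    (M0 M1 : α → Bool) (p : α) : Bool :=
  if Forced F bv (true, p) then true
  else if Forced F bv (false, p) then false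
  else if (true, p) ∈ U ∧ (false, p) ∉ U then true
  else if (false, p) ∈ U ∧ (true, p) ∉ U then false
  else if (true, p) ∈ U then M1 p else M0 p

section RepairLemmas

variable {F : NF α m n} {bv : Fin m → Bool} {U : Set (Lit α)} {M0 M1 : α → Bool}

lemma repair_holds_forced (hM0 : ∀ i, bv i = true → ∃ ℓ ∈ F.boxes i, litHolds M0 ℓ)
    {ℓ : Lit α} (hF : Forced F bv ℓ) : litHolds (repair F bv U M0 M1) ℓ := by
  obtain ⟨b, p⟩ := ℓ
  cases b with
  | true =>
    show repair F bv U M0 M1 p = true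
    unfold repair
    rw [if_pos hF]
  | false =>
    have hnt : ¬ Forced F bv (true, p) := by
      intro h
      exact litHolds_compl_elim (w := M0) (ℓ := (true, p))
        (forced_holds hM0 _ h) (forced_holds hM0 _ hF)
    show repair F bv U M0 M1 p = false
    unfold repair
    rw [if_neg hnt, if_pos hF]

lemma repair_holds_U {ℓ : Lit α} (hU : ℓ ∈ U) (hcU : Lit.compl ℓ ∉ U)
    (h1 : ¬ Forced F bv ℓ) (h2 : ¬ Forced F bv (Lit.compl ℓ)) :
    litHolds (repair F bv U M0 M1) ℓ := by
  obtain ⟨b, p⟩ := ℓ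
  cases b with
  | true =>
    have hcU' : (false, p) ∉ U := hcU
    have h2' : ¬ Forced F bv (false, p) := fun hx => h2 hx
    show repair F bv U M0 M1 p = true
    unfold repair
    rw [if_neg h1, if_neg h2', if_pos ⟨hU, hcU'⟩]
  | false =>
    have hcU' : (true, p) ∉ U := hcU
    have h2' : ¬ Forced F bv (true, p) := h2
    show repair F bv U M0 M1 p = false
    unfold repair
    rw [if_neg h2', if_neg h1, if_neg (fun hx => hcU' hx.1), if_pos ⟨hU, hcU'⟩]

lemma repair_eq_M1 {ℓ : Lit α} (hU : ℓ ∈ U) (hcU : Lit.compl ℓ ∈ U)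
    (h1 : ¬ Forced F bv ℓ) (h2 : ¬ Forced F bv (Lit.compl ℓ)) :
    repair F bv U M0 M1 ℓ.2 = M1 ℓ.2 := by
  obtain ⟨b, p⟩ := ℓ
  cases b with
  | true =>
    have hcU' : (false, p) ∈ U := hcU
    have h2' : ¬ Forced F bv (false, p) := fun hx => h2 hx
    show repair F bv U M0 M1 p = M1 p
    unfold repair
    rw [if_neg h1, if_neg h2', if_neg (fun hx => hx.2 hcU'), if_neg (fun hx => hx.2 hU),
      if_pos hU]
  | false =>
    have hcU' : (true, p) ∈ U := hcU
    have h2' : ¬ Forced F bv (true, p) := h2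
    show repair F bv U M0 M1 p = M1 p
    unfold repair
    rw [if_neg h2', if_neg h1, if_neg (fun hx => hx.2 hU), if_neg (fun hx => hx.2 hcU'),
      if_pos hcU']

lemma repair_eq_M0 {ℓ : Lit α} (hU : ℓ ∉ U) (hcU : Lit.compl ℓ ∉ U)
    (h1 : ¬ Forced F bv ℓ) (h2 : ¬ Forced F bv (Lit.compl ℓ)) :
    repair F bv U M0 M1 ℓ.2 = M0 ℓ.2 := by
  obtain ⟨b, p⟩ := ℓ
  cases b with
  | true =>
    have hcU' : (false, p) ∉ U := hcU
    have h2' : ¬ Forced F bv (false, p) := fun hx => h2 hx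
    show repair F bv U M0 M1 p = M0 p
    unfold repair
    rw [if_neg h1, if_neg h2', if_neg (fun hx => hU hx.1), if_neg (fun hx => hcU' hx.1),
      if_neg hU]
  | false =>
    have hcU' : (true, p) ∉ U := hcU
    have h2' : ¬ Forced F bv (true, p) := h2
    show repair F bv U M0 M1 p = M0 p
    unfold repair
    rw [if_neg h2', if_neg h1, if_neg (fun hx => hcU' hx.1), if_neg (fun hx => hU hx.1),
      if_neg hcU']

end RepairLemmas

section RepairMain

variable {F : NF α m n} {bv : Fin m → Bool} {j : Fin n} {M0 M1 : α → Bool}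

/-- The repaired world satisfies `dias j`. -/
lemma repair_dias
    (hM0 : ∀ i, bv i = true → ∃ ℓ ∈ F.boxes i, litHolds M0 ℓ)
    (hd : ∀ ℓ ∈ F.dias j, litHolds M1 ℓ)
    (hB : ∀ i, bv i = true → i ∈ Bset F j → ∃ ℓ ∈ F.boxes i, litHolds M1 ℓ) :
    ∀ ℓ ∈ F.dias j,
      litHolds (repair F bv (UPcl F {x : Lit α | x ∈ F.dias j}) M0 M1) ℓ := by
  set U : Set (Lit α) := UPcl F {x : Lit α | x ∈ F.dias j} with hUdef
  intro ℓ hm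
  have hU : ℓ ∈ U := subset_UPcl F _ hm
  by_cases hF : Forced F bv ℓ
  · exact repair_holds_forced hM0 hF
  by_cases hFc : Forced F bv (Lit.compl ℓ)
  · exact absurd (forced_holds_M1 hd hB _ hFc (by rw [Lit.compl_compl]; exact hU))
      (fun hh => litHolds_compl_elim (hd ℓ hm) hh)
  by_cases hcU : Lit.compl ℓ ∈ U
  · have := repair_eq_M1 (M0 := M0) (M1 := M1) hU hcU hF hFc
    show repair F bv U M0 M1 ℓ.2 = ℓ.1
    rw [this]
    exact hd ℓ hm
  · exact repair_holds_U hU hcU hF hFc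

/-- The repaired world satisfies every active box. -/
lemma repair_box
    (hM0 : ∀ i, bv i = true → ∃ ℓ ∈ F.boxes i, litHolds M0 ℓ)
    (hd : ∀ ℓ ∈ F.dias j, litHolds M1 ℓ)
    (hB : ∀ i, bv i = true → i ∈ Bset F j → ∃ ℓ ∈ F.boxes i, litHolds M1 ℓ)
    (i : Fin m) (hb : bv i = true) :
    ∃ ℓ ∈ F.boxes i,
      litHolds (repair F bv (UPcl F {x : Lit α | x ∈ F.dias j}) M0 M1) ℓ := by
  set U : Set (Lit α) := UPcl F {x : Lit α | x ∈ F.dias j} with hUdef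
  by_contra h
  push_neg at h
  have hA : ∀ ℓ ∈ F.boxes i, ¬ Forced F bv ℓ :=
    fun ℓ hm hf => h ℓ hm (repair_holds_forced hM0 hf)
  obtain ⟨ℓ₀, h0m, h0⟩ := hM0 i hb
  have h0nF : ¬ Forced F bv (Lit.compl ℓ₀) :=
    fun hf => litHolds_compl_elim h0 (forced_holds hM0 _ hf)
  have h0U : Lit.compl ℓ₀ ∈ U := by
    by_contra hc
    by_cases hU0 : ℓ₀ ∈ U
    · exact h ℓ₀ h0m (repair_holds_U hU0 hc (hA ℓ₀ h0m) h0nF)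
    · refine h ℓ₀ h0m ?_
      show repair F bv U M0 M1 ℓ₀.2 = ℓ₀.1
      rw [repair_eq_M0 hU0 hc (hA ℓ₀ h0m) h0nF]
      exact h0
  have hiB : i ∈ Bset F j :=
    ⟨Lit.compl ℓ₀, h0U, by rw [Lit.compl_compl]; exact h0m⟩
  have hclos0 : ∀ ℓ' ∈ F.boxes i, ℓ' ≠ ℓ₀ → ℓ' ∈ U := fun ℓ' hm' hne =>
    UPcl_step F h0U (by rw [Lit.compl_compl]; exact h0m) hm'
      (by rw [Lit.compl_compl]; exact hne)
  obtain ⟨ℓ₁, h1m, h1⟩ := hB i hb hiB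
  have h1nF : ¬ Forced F bv ℓ₁ := hA ℓ₁ h1m
  have h1nFc : ¬ Forced F bv (Lit.compl ℓ₁) := by
    intro hf
    by_cases he : ℓ₁ = ℓ₀
    · exact h0nF (he ▸ hf)
    · have hU1 : ℓ₁ ∈ U := hclos0 ℓ₁ h1m he
      have := forced_holds_M1 hd hB _ hf (by rw [Lit.compl_compl]; exact hU1)
      exact litHolds_compl_elim h1 this
  have h1nU : ℓ₁ ∉ U := by
    intro hU1
    have hcU1 : Lit.compl ℓ₁ ∈ U := by
      by_contra hc
      exact h ℓ₁ h1m (repair_holds_U hU1 hc h1nF h1nFc)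
    refine h ℓ₁ h1m ?_
    show repair F bv U M0 M1 ℓ₁.2 = ℓ₁.1
    rw [repair_eq_M1 hU1 hcU1 h1nF h1nFc]
    exact h1
  have he10 : ℓ₁ = ℓ₀ := by
    by_contra hne
    exact h1nU (hclos0 ℓ₁ h1m hne)
  have hall : ∀ ℓ' ∈ F.boxes i, ℓ' ≠ ℓ₁ → Forced F bv (Lit.compl ℓ') := by
    intro ℓ' hm' hne
    have hU' : ℓ' ∈ U := hclos0 ℓ' hm' (fun hx => hne (hx.trans he10.symm))
    by_contra hf
    by_cases hcU : Lit.compl ℓ' ∈ U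
    · exact h1nU (UPcl_step F hcU (by rw [Lit.compl_compl]; exact hm') h1m
        (by rw [Lit.compl_compl]; exact hne.symm))
    · exact h ℓ' hm' (repair_holds_U hU' hcU (hA ℓ' hm') hf)
  exact h1nF (Forced.step i ℓ₁ hb h1m hall)

end RepairMain

/-- The repaired assignment: replace the world `j+1` copies, whenever
`dⱼ` is true and `impliedⱼ` is false, by the repaired world. -/
noncomputable def repairV (F : NF α m n) (v : PAtom α m n → Bool) :
    PAtom α m n → Bool
  | PAtom.cp p ⟨0, h⟩ => v (PAtom.cp p ⟨0, h⟩)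
  | PAtom.cp p ⟨kk+1, hk⟩ =>
      let j : Fin n := ⟨kk, Nat.lt_of_succ_lt_succ hk⟩
      if v (PAtom.d j) = true ∧ v (PAtom.implied j) = false
      then repair F (fun i => v (PAtom.b i)) (UPcl F {x : Lit α | x ∈ F.dias j})
        (fun q => v (PAtom.cp q 0)) (fun q => v (PAtom.cp q j.succ)) p
      else v (PAtom.cp p ⟨kk+1, hk⟩)
  | PAtom.b i => v (PAtom.b i)
  | PAtom.d j => v (PAtom.d j)
  | PAtom.implied j => v (PAtom.implied j)

section RepairV

variable {F : NF α m n} {v : PAtom α m n → Bool}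

lemma repairV_b (i : Fin m) : repairV F v (PAtom.b i) = v (PAtom.b i) := rfl
lemma repairV_d (j : Fin n) : repairV F v (PAtom.d j) = v (PAtom.d j) := rfl
lemma repairV_implied (j : Fin n) :
    repairV F v (PAtom.implied j) = v (PAtom.implied j) := rfl

lemma repairV_cp0 (p : α) : repairV F v (PAtom.cp p 0) = v (PAtom.cp p 0) := by
  rcases h : (0 : Fin (n+1)) with ⟨kv, hkv⟩
  have hkv0 : kv = 0 := by
    have := congrArg Fin.val h
    simpa using this.symm
  subst hkv0
  rfl

lemma repairV_cp_succ (j : Fin n) (p : α) :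
    repairV F v (PAtom.cp p j.succ) =
      if v (PAtom.d j) = true ∧ v (PAtom.implied j) = false
      then repair F (fun i => v (PAtom.b i)) (UPcl F {x : Lit α | x ∈ F.dias j})
        (fun q => v (PAtom.cp q 0)) (fun q => v (PAtom.cp q j.succ)) p
      else v (PAtom.cp p j.succ) := rfl

end RepairV

end ReachAux

theorem reach_equisat_full {α : Type} {m n : ℕ} (F : NF α m n) :
    (∃ v : PAtom α m n → Bool, reachSat F v) ↔ (∃ v : PAtom α m n → Bool, fullSat F v) := by
  constructor
  · rintro ⟨v, hmat, hbox0, hboxB, himp_iff, himp_d, hdia⟩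
    classical
    have hM0 : ∀ i, v (PAtom.b i) = true →
        ∃ ℓ ∈ F.boxes i, litHolds (fun q => v (PAtom.cp q 0)) ℓ :=
      fun i hi => hbox0 i hi
    refine ⟨repairV F v, ?_, ?_, ?_, ?_, ?_, ?_⟩
    · intro C hC
      obtain ⟨L, hL, hP⟩ := hmat C hC
      refine ⟨L, hL, ?_⟩
      cases L with
      | lit ℓ =>
        show litAt (repairV F v) 0 ℓ
        unfold litAt
        rw [repairV_cp0]
        exact hP
      | boxRef i => exact hP
      | diaRef j => exact hP
    · intro i hi
      obtain ⟨ℓ, hm, hh⟩ := hbox0 i hi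
      exact ⟨ℓ, hm, by unfold litAt; rw [repairV_cp0]; exact hh⟩
    · intro i j hb hd himp
      have hd' : v (PAtom.d j) = true := hd
      have himp' : v (PAtom.implied j) = false := himp
      have hcond : v (PAtom.d j) = true ∧ v (PAtom.implied j) = false := ⟨hd', himp'⟩
      have hdiasj : ∀ ℓ ∈ F.dias j, litHolds (fun q => v (PAtom.cp q j.succ)) ℓ :=
        fun ℓ hm => hdia j hd' ℓ hm
      have hBj : ∀ i', (fun i'' => v (PAtom.b i'')) i' = true → i' ∈ Bset F j →
          ∃ ℓ ∈ F.boxes i', litHolds (fun q => v (PAtom.cp q j.succ)) ℓ :=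
        fun i' hb' hB => hboxB i' j hB hb' hd' himp'
      obtain ⟨ℓ, hm, hh⟩ := repair_box (F := F) (bv := fun i'' => v (PAtom.b i''))
        (j := j) hM0 hdiasj hBj i hb
      refine ⟨ℓ, hm, ?_⟩
      show repairV F v (PAtom.cp ℓ.2 j.succ) = ℓ.1
      rw [repairV_cp_succ, if_pos hcond]
      exact hh
    · intro j
      have : diaAt F (repairV F v) 0 j ↔ diaAt F v 0 j := by
        unfold diaAt litAt
        constructor
        · intro hh ℓ hm
          have := hh ℓ hm
          rwa [repairV_cp0] at this
        · intro hh ℓ hm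
          rw [repairV_cp0]
          exact hh ℓ hm
      rw [this]
      exact himp_iff j
    · intro j hi
      exact himp_d j hi
    · intro j hd
      have hd' : v (PAtom.d j) = true := hd
      cases himp : v (PAtom.implied j) with
      | false =>
        have hcond : v (PAtom.d j) = true ∧ v (PAtom.implied j) = false := ⟨hd', himp⟩
        have hdiasj : ∀ ℓ ∈ F.dias j, litHolds (fun q => v (PAtom.cp q j.succ)) ℓ :=
          fun ℓ hm => hdia j hd' ℓ hm
        have hBj : ∀ i', (fun i'' => v (PAtom.b i'')) i' = true → i' ∈ Bset F j →
            ∃ ℓ ∈ F.boxes i', litHolds (fun q => v (PAtom.cp q j.succ)) ℓ :=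
          fun i' hb' hB => hboxB i' j hB hb' hd' himp
        intro ℓ hm
        show repairV F v (PAtom.cp ℓ.2 j.succ) = ℓ.1
        rw [repairV_cp_succ, if_pos hcond]
        exact repair_dias (F := F) (bv := fun i'' => v (PAtom.b i'')) (j := j)
          hM0 hdiasj hBj ℓ hm
      | true =>
        intro ℓ hm
        show repairV F v (PAtom.cp ℓ.2 j.succ) = ℓ.1
        rw [repairV_cp_succ, if_neg (fun hx => by rw [himp] at hx; exact absurd hx.2 (by simp))]
        exact hdia j hd' ℓ hm
  · rintro ⟨v, h1, h2, h3, h4, h5, h6⟩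
    exact ⟨v, h1, h2, fun i j _ hb hd hi => h3 i j hb hd hi, h4, h5, h6⟩
end

section
/- Let φ be an S5-NF formula with n ◇-literals. If φ is satisfiable, then φ has a model consisting of at most n+1 worlds; more precisely, there is a list I = [I₀,…,I_k] with k ≤ n such that (I,0) ⊨ φ. -/
theorem small_model_property {α : Type} {m n : ℕ} (F : NF α m n)
    (h : F.s5sat) :
    ∃ I : List (α → Bool), I ≠ [] ∧ I.length ≤ n + 1 ∧ F.s5satOn I := by
  classical
  obtain ⟨I, hne, hsat⟩ := h
  have hI0 : 0 < I.length := List.length_pos_iff.mpr hne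
  set g : Fin n → (α → Bool) := fun j =>
    if h : ∃ k, k < I.length ∧ ∀ ℓ ∈ F.dias j, litHolds (I.getD k dfltW) ℓ
    then I.getD h.choose dfltW else I.getD 0 dfltW with hg
  set I' : List (α → Bool) := I.getD 0 dfltW :: List.ofFn g with hI'
  have hgd : ∀ (j : Fin n), I'.getD (j + 1) dfltW = g j := by
    intro j
    simp [hI', List.getD, List.getElem?_ofFn, j.isLt]
  refine ⟨I', by simp [hI'], by simp [hI'], ?_⟩
  have hmem : ∀ k, k < I'.length →
      ∃ k', k' < I.length ∧ I'.getD k dfltW = I.getD k' dfltW := by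
    intro k hk
    match k with
    | 0 => exact ⟨0, hI0, rfl⟩
    | Nat.succ k =>
      simp only [hI', List.length_cons, List.length_ofFn] at hk
      have hk' : k < n := by omega
      have h1 : I'.getD (k+1) dfltW = g ⟨k, hk'⟩ := hgd ⟨k, hk'⟩
      rw [h1, hg]
      dsimp only
      split
      · next hx => exact ⟨hx.choose, hx.choose_spec.1, rfl⟩
      · exact ⟨0, hI0, rfl⟩
  intro C hC
  obtain ⟨L, hL, hLs⟩ := hsat C hC
  refine ⟨L, hL, ?_⟩
  cases L with
  | lit ℓ => simpa [NF.matLitSat, hI'] using hLs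
  | boxRef i =>
    intro k hk
    obtain ⟨k', hk', he⟩ := hmem k hk
    rw [he]; exact hLs k' hk'
  | diaRef j =>
    obtain ⟨k, hk, hw⟩ := hLs
    have hex : ∃ k, k < I.length ∧ ∀ ℓ ∈ F.dias j, litHolds (I.getD k dfltW) ℓ :=
      ⟨k, hk, hw⟩
    refine ⟨j + 1, ?_, ?_⟩
    · simp only [hI', List.length_cons, List.length_ofFn]
      omega
    · rw [hgd j, hg]
      dsimp only
      rw [dif_pos hex]
      exact hex.choose_spec.2
end

section
/- Let φ be an S5-NF formula and Γ ∈ {full(φ), reach(φ)}. Let conflicts(Γ,φ) be Γ extended with the clauses ¬bᵢ ∨ ¬dⱼ for all pairs such that the complement of lits(ψ^□ᵢ) is contained in lits(ψ^◇ⱼ). Then conflicts(Γ,φ) is propositionally satisfiable if and only if Γ is propositionally satisfiable. -/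
lemma litAt_compl_false {α : Type} {m n : ℕ} (v : PAtom α m n → Bool)
    (j : Fin (n + 1)) (ℓ : Lit α) (h1 : litAt v j ℓ) (h2 : litAt v j (Lit.compl ℓ)) :
    False := by
  simp only [litAt, Lit.compl] at h1 h2
  rw [h1] at h2
  simp at h2

lemma mem_Bset {α : Type} {m n : ℕ} (F : NF α m n) {i : Fin m} {j : Fin n}
    (h : ∀ ℓ ∈ F.boxes i, Lit.compl ℓ ∈ F.dias j) : i ∈ Bset F j := by
  obtain ⟨ℓ, hℓ⟩ := List.exists_mem_of_ne_nil _ (F.boxes_ne i)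
  refine ⟨Lit.compl ℓ, ?_, ?_⟩
  · intro T hT
    exact hT.1 (h ℓ hℓ)
  · have : Lit.compl (Lit.compl ℓ) = ℓ := by simp [Lit.compl]
    rw [this]; exact hℓ

lemma full_conflicts {α : Type} {m n : ℕ} (F : NF α m n) (v : PAtom α m n → Bool)
    (hv : fullSat F v) : conflictsExtra F v := by
  obtain ⟨_, hb0, hbj, himp, _, hd⟩ := hv
  rintro i j hsub ⟨hbi, hdj⟩
  cases himpj : v (PAtom.implied j) with
  | true =>
    have hdia := (himp j).mp himpj
    obtain ⟨ℓ, hℓ, hℓ0⟩ := hb0 i hbi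
    exact litAt_compl_false v 0 ℓ hℓ0 (hdia _ (hsub ℓ hℓ))
  | false =>
    have hdia := hd j hdj
    obtain ⟨ℓ, hℓ, hℓj⟩ := hbj i j hbi hdj himpj
    exact litAt_compl_false v j.succ ℓ hℓj (hdia _ (hsub ℓ hℓ))

lemma reach_conflicts {α : Type} {m n : ℕ} (F : NF α m n) (v : PAtom α m n → Bool)
    (hv : reachSat F v) : conflictsExtra F v := by
  obtain ⟨_, hb0, hbj, himp, _, hd⟩ := hv
  rintro i j hsub ⟨hbi, hdj⟩
  cases himpj : v (PAtom.implied j) with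
  | true =>
    have hdia := (himp j).mp himpj
    obtain ⟨ℓ, hℓ, hℓ0⟩ := hb0 i hbi
    exact litAt_compl_false v 0 ℓ hℓ0 (hdia _ (hsub ℓ hℓ))
  | false =>
    have hdia := hd j hdj
    obtain ⟨ℓ, hℓ, hℓj⟩ := hbj i j (mem_Bset F hsub) hbi hdj himpj
    exact litAt_compl_false v j.succ ℓ hℓj (hdia _ (hsub ℓ hℓ))

theorem conflicts_equisat {α : Type} {m n : ℕ} (F : NF α m n) :
    ((∃ v : PAtom α m n → Bool, fullSat F v ∧ conflictsExtra F v) ↔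
      (∃ v : PAtom α m n → Bool, fullSat F v)) ∧
    ((∃ v : PAtom α m n → Bool, reachSat F v ∧ conflictsExtra F v) ↔
      (∃ v : PAtom α m n → Bool, reachSat F v)) := by
  constructor
  · exact ⟨fun ⟨v, hv, _⟩ => ⟨v, hv⟩, fun ⟨v, hv⟩ => ⟨v, hv, full_conflicts F v hv⟩⟩
  · exact ⟨fun ⟨v, hv, _⟩ => ⟨v, hv⟩, fun ⟨v, hv⟩ => ⟨v, hv, reach_conflicts F v hv⟩⟩
end
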